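/- If G is a graph with diameter at most 3, then every independent set in G is a mutual-visibility set, and consequently μ_i(G) = α(G). -/

import Mathlib

open SimpleGraph

variable {V W : Type*}

/-- Two vertices of `X` are `X`-visible if some geodesic between them has all
internal vertices outside `X`; `X` is a mutual-visibility set if this holds
for every reachable pair of vertices of `X`. -/
def IsMVSet (G : SimpleGraph V) (X : Set V) : Prop :=
  ∀ x ∈ X, ∀ y ∈ X, x ≠ y → G.Reachable x y →
    ∃ p : G.Walk x y, p.length = G.dist x y ∧
      ∀ z ∈ p.support, z ≠ x → z ≠ y → z ∉ X

/-- An independent mutual-visibility set. -/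
def IsIMVSet (G : SimpleGraph V) (X : Set V) : Prop :=
  (∀ x ∈ X, ∀ y ∈ X, ¬ G.Adj x y) ∧ IsMVSet G X

/-- The mutual-visibility chromatic number: the least `k` such that the vertex
set partitions into `k` mutual-visibility sets. -/
noncomputable def mvChrom (G : SimpleGraph V) : ℕ :=
  sInf {k | ∃ f : V → Fin k, ∀ i, IsMVSet G (f ⁻¹' {i})}

/-- The independent mutual-visibility chromatic number. -/
noncomputable def imvChrom (G : SimpleGraph V) : ℕ :=
  sInf {k | ∃ f : V → Fin k, ∀ i, IsIMVSet G (f ⁻¹' {i})}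

/-- The chromatic number, as a natural number. -/
noncomputable def chromNat (G : SimpleGraph V) : ℕ :=
  sInf {k | G.Colorable k}

/-- The independent mutual-visibility number `μᵢ(G)`. -/
noncomputable def imvNum (G : SimpleGraph V) : ℕ :=
  sSup {n | ∃ s : Finset V, IsIMVSet G ↑s ∧ s.card = n}

/-- The independence number `α(G)`. -/
noncomputable def indepNum (G : SimpleGraph V) : ℕ :=
  sSup {n | ∃ s : Finset V, (∀ x ∈ s, ∀ y ∈ s, ¬ G.Adj x y) ∧ s.card = n}

namespace SimpleGraph.Walk

variable {G : SimpleGraph V}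

theorem adj_or_adj_of_mem_support_of_length_le_three {u v z : V} (p : G.Walk u v)
    (hp : p.length ≤ 3) (hz : z ∈ p.support) (hzu : z ≠ u) (hzv : z ≠ v) :
    G.Adj u z ∨ G.Adj z v := by
  rcases p with _ | ⟨h₁, _ | ⟨h₂, _ | ⟨h₃, _ | ⟨h₄, q⟩⟩⟩⟩
  · simp_all
  · simp_all
  · simp_all
  · simp only [support_cons, support_nil, List.mem_cons,
      List.not_mem_nil, or_false] at hz
    rcases hz with rfl | rfl | rfl | rfl <;> simp_all
  · simp only [length_cons] at hp
    omega

end SimpleGraph.Walk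

theorem isMVSet_of_forall_not_adj_of_forall_dist_le_three {G : SimpleGraph V} {X : Set V}
    (hdist : ∀ x ∈ X, ∀ y ∈ X, G.dist x y ≤ 3) (hX : ∀ x ∈ X, ∀ y ∈ X, ¬ G.Adj x y) :
    IsMVSet G X := by
  intro x hx y hy _ hxy
  obtain ⟨p, hp⟩ := hxy.exists_walk_length_eq_dist
  refine ⟨p, hp, fun z hz hzx hzy hzX => ?_⟩
  rcases p.adj_or_adj_of_mem_support_of_length_le_three (hp ▸ hdist x hx y hy) hz hzx hzy
    with h | h
  · exact hX x hx z hzX h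
  · exact hX z hzX y hy h

theorem imvNum_eq_indepNum_of_forall_isMVSet {G : SimpleGraph V}
    (h : ∀ X : Set V, (∀ x ∈ X, ∀ y ∈ X, ¬ G.Adj x y) → IsMVSet G X) :
    imvNum G = _root_.indepNum G := by
  unfold imvNum _root_.indepNum
  congr 1
  ext n
  constructor
  · rintro ⟨s, ⟨hind, -⟩, hcard⟩
    exact ⟨s, hind, hcard⟩
  · rintro ⟨s, hind, hcard⟩
    exact ⟨s, ⟨hind, h _ hind⟩, hcard⟩

theorem stmt6 (G : SimpleGraph V)
    (hdiam : ∀ u v : V, G.dist u v ≤ 3) :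
    (∀ X : Set V, (∀ x ∈ X, ∀ y ∈ X, ¬ G.Adj x y) → IsMVSet G X) ∧
      imvNum G = _root_.indepNum G := by
  have hMV : ∀ X : Set V, (∀ x ∈ X, ∀ y ∈ X, ¬ G.Adj x y) → IsMVSet G X := fun _ =>
    isMVSet_of_forall_not_adj_of_forall_dist_le_three fun x _ y _ => hdiam x y
  exact ⟨hMV, imvNum_eq_indepNum_of_forall_isMVSet hMV⟩
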